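/- There exist constants $C>0$ and $\theta\in(0,1)$ such that for every $\delta>0$ and all $\bar a,\bar b\in\Sigma$ with $d_\Sigma(\bar a,\bar b)<\delta$ one has $|c_{\bar a}(i)-c_{\bar b}(i)|<C\,\theta^{1/\delta}$ for all $i\in\{1,\dots,l\}$. In particular, for each $i$ the map $\bar a\mapsto c_{\bar a}(i)$ is continuous from $(\Sigma,d_\Sigma)$ to $\mathbb R$. -/

import Mathlib

open Filter Topology

noncomputable section

/-- Product of matrices `A (a 0) * A (a 1) * ⋯ * A (a (n-1))`,
representing `A_{a_1} A_{a_2} ⋯ A_{a_n}` for the (1-indexed) sequence `ā`. -/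
def matSeq {l k : ℕ} {R : Type} [Semiring R] (A : Fin k → Matrix (Fin l) (Fin l) R) :
    (ℕ → Fin k) → ℕ → Matrix (Fin l) (Fin l) R
  | _, 0 => 1
  | a, n + 1 => A (a 0) * matSeq A (fun i => a (i + 1)) n

/-- Product `ω (a 0) * ⋯ * ω (a (n-1))`, representing `ω_{a_1} ⋯ ω_{a_n}`. -/
def prodSeq {k : ℕ} (ω : Fin k → ℝ) : (ℕ → Fin k) → ℕ → ℝ
  | _, 0 => 1
  | a, n + 1 => ω (a 0) * prodSeq ω (fun i => a (i + 1)) n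

open Classical in
/-- The metric on `Σ = {1,…,k}^ℕ`: `d(ā,b̄) = 1/L` where `L` is the least (1-indexed)
position where the sequences differ, and `0` if they are equal. -/
def dSigma {k : ℕ} (a b : ℕ → Fin k) : ℝ :=
  if h : ∃ n, a n ≠ b n then 1 / ((Nat.find h : ℝ) + 1) else 0

/-- The matrix `E^n_ā` with entries `(A^n_ā)_{ij} / (ω^n_ā V_j)`. -/
def Emat {l k : ℕ} (A : Fin k → Matrix (Fin l) (Fin l) ℝ) (ω : Fin k → ℝ) (V : Fin l → ℝ)
    (a : ℕ → Fin k) (n : ℕ) : Matrix (Fin l) (Fin l) ℝ :=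
  fun i j => matSeq A a n i j / (prodSeq ω a n * V j)

/-- The set of columns of `E^n_ā`, as vectors of `ℝ^l`. -/
def Ecols {l k : ℕ} (A : Fin k → Matrix (Fin l) (Fin l) ℝ) (ω : Fin k → ℝ) (V : Fin l → ℝ)
    (a : ℕ → Fin k) (n : ℕ) : Set (EuclideanSpace ℝ (Fin l)) :=
  {v | ∃ j : Fin l, ∀ i : Fin l, v i = Emat A ω V a n i j}

/-- `Δ^n_ā`, the convex hull in `ℝ^l` of the columns of `E^n_ā`. -/
def DeltaSet {l k : ℕ} (A : Fin k → Matrix (Fin l) (Fin l) ℝ) (ω : Fin k → ℝ) (V : Fin l → ℝ)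
    (a : ℕ → Fin k) (n : ℕ) : Set (EuclideanSpace ℝ (Fin l)) :=
  convexHull ℝ (Ecols A ω V a n)

/-!
Write `E^{m+t}_ā = E^m_ā · W`, where `W = diag(V) E^t_{σ^m ā}`. Because `V` is a common left
eigenvector, `W` is column-stochastic, so every entry of row `i` of `E^{m+t}_ā` is a convex
combination of the entries of row `i` of `E^m_ā`. Primitivity gives a uniform `η > 0` below all
entries of `W` when `t = N`, and then the spread (max minus min) of a row shrinks by the factor
`1 - 2η` every `N` steps. The limit `c_ā(i)` lies between the extreme entries of row `i` of
`E^m_ā` for every `m`, and that row only depends on `a_1, …, a_m`; if `ā` and `b̄` agree on their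
first `m` letters, `|c_ā(i) - c_b̄(i)|` is therefore at most `(1 - 2η)^{⌊m/N⌋} / V_i`.
-/

open Matrix

section Products

variable {l k : ℕ}

theorem matSeq_congr {R : Type} [Semiring R] (A : Fin k → Matrix (Fin l) (Fin l) R) {n : ℕ}
    {a b : ℕ → Fin k} (h : ∀ s < n, a s = b s) : matSeq A a n = matSeq A b n := by
  induction n generalizing a b with
  | zero => rfl
  | succ n ih => rw [matSeq, matSeq, h 0 n.succ_pos, ih fun s hs => h (s + 1) (by omega)]

theorem prodSeq_congr (ω : Fin k → ℝ) {n : ℕ} {a b : ℕ → Fin k} (h : ∀ s < n, a s = b s) :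
    prodSeq ω a n = prodSeq ω b n := by
  induction n generalizing a b with
  | zero => rfl
  | succ n ih => rw [prodSeq, prodSeq, h 0 n.succ_pos, ih fun s hs => h (s + 1) (by omega)]

theorem matSeq_add {R : Type} [Semiring R] (A : Fin k → Matrix (Fin l) (Fin l) R)
    (a : ℕ → Fin k) (m n : ℕ) :
    matSeq A a (m + n) = matSeq A a m * matSeq A (fun s => a (s + m)) n := by
  induction m generalizing a with
  | zero => simp [matSeq]
  | succ m ih =>
    rw [Nat.succ_add, matSeq, matSeq, ih, mul_assoc]
    simp only [Nat.add_assoc]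

theorem prodSeq_add (ω : Fin k → ℝ) (a : ℕ → Fin k) (m n : ℕ) :
    prodSeq ω a (m + n) = prodSeq ω a m * prodSeq ω (fun s => a (s + m)) n := by
  induction m generalizing a with
  | zero => simp [prodSeq]
  | succ m ih =>
    rw [Nat.succ_add, prodSeq, prodSeq, ih, mul_assoc]
    simp only [Nat.add_assoc]

theorem matSeq_nonneg {R : Type} [Semiring R] [PartialOrder R] [IsOrderedRing R]
    {A : Fin k → Matrix (Fin l) (Fin l) R} (hA : ∀ i p q, 0 ≤ A i p q) (a : ℕ → Fin k) (n : ℕ)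
    (p q : Fin l) : 0 ≤ matSeq A a n p q := by
  induction n generalizing a p q with
  | zero =>
    rw [matSeq, one_apply]
    split_ifs <;> simp
  | succ n ih =>
    rw [matSeq, mul_apply]
    exact Finset.sum_nonneg fun s _ => mul_nonneg (hA _ _ _) (ih _ _ _)

theorem prodSeq_pos {ω : Fin k → ℝ} (hω : ∀ i, 0 < ω i) (a : ℕ → Fin k) (n : ℕ) :
    0 < prodSeq ω a n := by
  induction n generalizing a with
  | zero => exact one_pos
  | succ n ih => exact mul_pos (hω _) (ih _)

theorem prodSeq_inv (ω : Fin k → ℝ) (a : ℕ → Fin k) (n : ℕ) :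
    prodSeq (fun i => (ω i)⁻¹) a n = (prodSeq ω a n)⁻¹ := by
  induction n generalizing a with
  | zero => simp [prodSeq]
  | succ n ih => rw [prodSeq, prodSeq, ih, mul_inv]

theorem matSeq_smul (A : Fin k → Matrix (Fin l) (Fin l) ℝ) (ω : Fin k → ℝ) (a : ℕ → Fin k)
    (n : ℕ) : matSeq (fun i => ω i • A i) a n = prodSeq ω a n • matSeq A a n := by
  induction n generalizing a with
  | zero => simp [matSeq, prodSeq]
  | succ n ih => rw [matSeq, matSeq, prodSeq, ih, smul_mul_smul_comm]

theorem vecMul_matSeq {A : Fin k → Matrix (Fin l) (Fin l) ℝ} {ω : Fin k → ℝ} {V : Fin l → ℝ}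
    (hV : ∀ i, V ᵥ* A i = ω i • V) (a : ℕ → Fin k) (n : ℕ) :
    V ᵥ* matSeq A a n = prodSeq ω a n • V := by
  induction n generalizing a with
  | zero => simp [matSeq, prodSeq]
  | succ n ih => rw [matSeq, prodSeq, ← vecMul_vecMul, hV, smul_vecMul, ih, smul_smul]

end Products

structure IsPerronTriple {l k : ℕ} (A : Fin k → Matrix (Fin l) (Fin l) ℝ) (ω : Fin k → ℝ)
    (V : Fin l → ℝ) : Prop where
  nonneg : ∀ i p q, 0 ≤ A i p q
  eigenvalue_pos : ∀ i, 0 < ω i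
  eigenvector_pos : ∀ p, 0 < V p
  vecMul_eq : ∀ i, V ᵥ* A i = ω i • V

section Emat

variable {l k : ℕ} {A : Fin k → Matrix (Fin l) (Fin l) ℝ} {ω : Fin k → ℝ} {V : Fin l → ℝ}

theorem Emat_congr {n : ℕ} {a b : ℕ → Fin k} (h : ∀ s < n, a s = b s) :
    Emat A ω V a n = Emat A ω V b n := by
  ext p q
  rw [Emat, Emat, matSeq_congr A h, prodSeq_congr ω h]

theorem Emat_eq_div (a : ℕ → Fin k) (n : ℕ) (p q : Fin l) :
    Emat A ω V a n p q = matSeq (fun i => (ω i)⁻¹ • A i) a n p q / V q := by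
  rw [Emat, matSeq_smul, prodSeq_inv, Matrix.smul_apply, smul_eq_mul, div_mul_eq_div_div,
    inv_mul_eq_div]

theorem Emat_add (hω : ∀ i, 0 < ω i) (hV : ∀ p, 0 < V p) (a : ℕ → Fin k) (m t : ℕ) :
    Emat A ω V a (m + t) = Emat A ω V a m * (diagonal V * Emat A ω V (fun s => a (s + m)) t) := by
  ext i j
  rw [mul_apply, Emat, matSeq_add, prodSeq_add, mul_apply, Finset.sum_div]
  refine Finset.sum_congr rfl fun p _ => ?_
  rw [diagonal_mul, Emat, Emat]
  have := (prodSeq_pos hω a m).ne'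
  have := (prodSeq_pos hω (fun s => a (s + m)) t).ne'
  have := (hV p).ne'
  field_simp

theorem Emat_nonneg (h : IsPerronTriple A ω V) (a : ℕ → Fin k) (n : ℕ) (p q : Fin l) :
    0 ≤ Emat A ω V a n p q :=
  div_nonneg (matSeq_nonneg h.nonneg a n p q)
    (mul_pos (prodSeq_pos h.eigenvalue_pos a n) (h.eigenvector_pos q)).le

theorem sum_mul_Emat (h : IsPerronTriple A ω V) (a : ℕ → Fin k) (n : ℕ) (q : Fin l) :
    ∑ p, V p * Emat A ω V a n p q = 1 := by
  have hcol := congrFun (vecMul_matSeq h.vecMul_eq a n) q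
  simp only [vecMul, dotProduct, Pi.smul_apply, smul_eq_mul] at hcol
  simp only [Emat, mul_div_assoc', ← Finset.sum_div, hcol]
  exact div_self (mul_pos (prodSeq_pos h.eigenvalue_pos a n) (h.eigenvector_pos q)).ne'

theorem Emat_le_inv (h : IsPerronTriple A ω V) (a : ℕ → Fin k) (n : ℕ) (p q : Fin l) :
    Emat A ω V a n p q ≤ (V p)⁻¹ := by
  have hp := h.eigenvector_pos p
  rw [← one_div, le_div_iff₀ hp, mul_comm, ← sum_mul_Emat h a n q]
  exact Finset.single_le_sum (f := fun p => V p * Emat A ω V a n p q)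
    (fun p _ => mul_nonneg (h.eigenvector_pos p).le (Emat_nonneg h a n p q)) (Finset.mem_univ p)

end Emat

section Stochastic

variable {ι κ : Type*}

def spread (x : ι → ℝ) : ℝ := (⨆ p, x p) - ⨅ p, x p

theorem spread_le [Nonempty ι] {x : ι → ℝ} {lo hi : ℝ} (h : ∀ p, lo ≤ x p ∧ x p ≤ hi) :
    spread x ≤ hi - lo :=
  sub_le_sub (ciSup_le fun p => (h p).2) (le_ciInf fun p => (h p).1)

variable [Fintype ι]

theorem sum_mul_le_sub_mul {x w : ι → ℝ} {hi η : ℝ} (hx : ∀ p, x p ≤ hi) (hη : 0 ≤ η)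
    (hw : ∀ p, η ≤ w p) (hsum : ∑ p, w p = 1) (p₀ : ι) :
    ∑ p, x p * w p ≤ hi - η * (hi - x p₀) := by
  have hsplit : ∑ p, x p * w p = hi - ∑ p, (hi - x p) * w p := by
    simp only [sub_mul, Finset.sum_sub_distrib, ← Finset.mul_sum, hsum, mul_one, sub_sub_cancel]
  have hp₀ : (hi - x p₀) * w p₀ ≤ ∑ p, (hi - x p) * w p :=
    Finset.single_le_sum (f := fun p => (hi - x p) * w p)
      (fun p _ => mul_nonneg (sub_nonneg.2 (hx p)) (hη.trans (hw p))) (Finset.mem_univ p₀)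
  nlinarith [mul_le_mul_of_nonneg_left (hw p₀) (sub_nonneg.2 (hx p₀))]

variable [Nonempty ι]

theorem vecMul_mem_Icc (x : ι → ℝ) {W : Matrix ι κ ℝ} {η : ℝ} (hη : 0 ≤ η)
    (hW : ∀ p j, η ≤ W p j) (hsum : ∀ j, ∑ p, W p j = 1) (j : κ) :
    (⨅ p, x p) + η * spread x ≤ (x ᵥ* W) j ∧ (x ᵥ* W) j ≤ (⨆ p, x p) - η * spread x := by
  obtain ⟨p₀, hp₀⟩ := exists_eq_ciInf_of_finite (f := x)
  obtain ⟨p₁, hp₁⟩ := exists_eq_ciSup_of_finite (f := x)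
  have hle : ∀ p, x p ≤ ⨆ p, x p := le_ciSup (Finite.bddAbove_range x)
  have hge : ∀ p, ⨅ p, x p ≤ x p := ciInf_le (Finite.bddBelow_range x)
  simp only [vecMul, dotProduct, spread]
  constructor
  · have := sum_mul_le_sub_mul (x := fun p => -x p) (hi := -⨅ p, x p)
      (fun p => neg_le_neg (hge p)) hη (hW · j) (hsum j) p₁
    simp only [neg_mul, Finset.sum_neg_distrib, hp₁] at this
    linarith
  · have := sum_mul_le_sub_mul hle hη (hW · j) (hsum j) p₀
    rwa [hp₀] at this

theorem spread_vecMul_le [Nonempty κ] (x : ι → ℝ) {W : Matrix ι κ ℝ} {η : ℝ} (hη : 0 ≤ η)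
    (hW : ∀ p j, η ≤ W p j) (hsum : ∀ j, ∑ p, W p j = 1) :
    spread (x ᵥ* W) ≤ (1 - 2 * η) * spread x := by
  refine (spread_le (vecMul_mem_Icc x hη hW hsum)).trans_eq ?_
  simp only [spread]
  ring

end Stochastic

section Rows

variable {l k : ℕ} {A : Fin k → Matrix (Fin l) (Fin l) ℝ} {ω : Fin k → ℝ} {V : Fin l → ℝ}

theorem Emat_add_mem_Icc (h : IsPerronTriple A ω V) (a : ℕ → Fin k) (m t : ℕ) (i j : Fin l) :
    (⨅ p, Emat A ω V a m i p) ≤ Emat A ω V a (m + t) i j ∧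
      Emat A ω V a (m + t) i j ≤ ⨆ p, Emat A ω V a m i p := by
  have : Nonempty (Fin l) := ⟨i⟩
  have hW : ∀ p q, 0 ≤ (diagonal V * Emat A ω V (fun s => a (s + m)) t) p q := fun p q => by
    rw [diagonal_mul]; exact mul_nonneg (h.eigenvector_pos p).le (Emat_nonneg h _ t p q)
  have hsum : ∀ q, ∑ p, (diagonal V * Emat A ω V (fun s => a (s + m)) t) p q = 1 := fun q => by
    simp only [diagonal_mul]; exact sum_mul_Emat h _ t q
  rw [Emat_add h.eigenvalue_pos h.eigenvector_pos, mul_apply_eq_vecMul]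
  simpa using vecMul_mem_Icc (Emat A ω V a m i) le_rfl hW hsum j

theorem spread_Emat_add_le (h : IsPerronTriple A ω V) {η : ℝ} (hη : 0 ≤ η) {N : ℕ}
    (hw : ∀ b p q, η ≤ V p * Emat A ω V b N p q) (a : ℕ → Fin k) (m : ℕ) (i : Fin l) :
    spread (Emat A ω V a (m + N) i) ≤ (1 - 2 * η) * spread (Emat A ω V a m i) := by
  have : Nonempty (Fin l) := ⟨i⟩
  rw [Emat_add h.eigenvalue_pos h.eigenvector_pos, mul_apply_eq_vecMul]
  exact spread_vecMul_le _ hη (fun p q => by rw [diagonal_mul]; exact hw _ p q)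
    (fun q => by simp only [diagonal_mul]; exact sum_mul_Emat h _ N q)

theorem spread_Emat_le (h : IsPerronTriple A ω V) {η : ℝ} (hη : 0 ≤ η) (hη' : 2 * η ≤ 1)
    {N : ℕ} (hw : ∀ b p q, η ≤ V p * Emat A ω V b N p q) (a : ℕ → Fin k) (m : ℕ) (i : Fin l) :
    spread (Emat A ω V a m i) ≤ (1 - 2 * η) ^ (m / N) * (V i)⁻¹ := by
  have : Nonempty (Fin l) := ⟨i⟩
  suffices ∀ q r, spread (Emat A ω V a (r + q * N) i) ≤ (1 - 2 * η) ^ q * (V i)⁻¹ by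
    simpa only [Nat.mod_add_div'] using this (m / N) (m % N)
  intro q r
  induction q with
  | zero =>
    simpa using spread_le fun j => ⟨Emat_nonneg h a _ i j, Emat_le_inv h a _ i j⟩
  | succ q ih =>
    calc spread (Emat A ω V a (r + (q + 1) * N) i)
        ≤ (1 - 2 * η) * spread (Emat A ω V a (r + q * N) i) := by
          rw [Nat.succ_mul, ← Nat.add_assoc]; exact spread_Emat_add_le h hη hw a _ i
      _ ≤ (1 - 2 * η) * ((1 - 2 * η) ^ q * (V i)⁻¹) := by gcongr
      _ = (1 - 2 * η) ^ (q + 1) * (V i)⁻¹ := by ring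

theorem limit_mem_Icc (h : IsPerronTriple A ω V) {a : ℕ → Fin k} {i j : Fin l} {x : ℝ}
    (hx : Tendsto (fun n => Emat A ω V a n i j) atTop (𝓝 x)) (m : ℕ) :
    (⨅ p, Emat A ω V a m i p) ≤ x ∧ x ≤ ⨆ p, Emat A ω V a m i p := by
  have hbounds : ∀ᶠ n in atTop, (⨅ p, Emat A ω V a m i p) ≤ Emat A ω V a n i j ∧
      Emat A ω V a n i j ≤ ⨆ p, Emat A ω V a m i p := by
    filter_upwards [eventually_ge_atTop m] with n hn
    simpa only [Nat.add_sub_cancel' hn] using Emat_add_mem_Icc h a m (n - m) i j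
  exact ⟨ge_of_tendsto hx (hbounds.mono fun _ => And.left),
    le_of_tendsto hx (hbounds.mono fun _ => And.right)⟩

theorem abs_sub_limit_le_of_eqOn (h : IsPerronTriple A ω V) {η : ℝ} (hη : 0 ≤ η)
    (hη' : 2 * η ≤ 1) {N : ℕ} (hw : ∀ b p q, η ≤ V p * Emat A ω V b N p q) {a b : ℕ → Fin k}
    {m : ℕ} (hab : ∀ s < m, a s = b s) {i j j' : Fin l} {x y : ℝ}
    (hx : Tendsto (fun n => Emat A ω V a n i j) atTop (𝓝 x))
    (hy : Tendsto (fun n => Emat A ω V b n i j') atTop (𝓝 y)) :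
    |x - y| ≤ (1 - 2 * η) ^ (m / N) * (V i)⁻¹ := by
  have hxm := limit_mem_Icc h hx m
  have hym := limit_mem_Icc h hy m
  rw [← Emat_congr hab] at hym
  have := spread_Emat_le h hη hη' hw a m i
  rw [spread] at this
  rw [abs_sub_le_iff]
  constructor <;> linarith [hxm.1, hxm.2, hym.1, hym.2]

end Rows

theorem exists_pos_le_of_finite {α : Type*} [Finite α] (f : α → ℝ) (hf : ∀ x, 0 < f x) :
    ∃ η, 0 < η ∧ ∀ x, η ≤ f x := by
  rcases isEmpty_or_nonempty α with _ | _
  · exact ⟨1, one_pos, isEmptyElim⟩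
  · obtain ⟨x₀, hx₀⟩ := Finite.exists_min f
    exact ⟨f x₀, hf x₀, hx₀⟩

theorem exists_pos_le_of_eqOn_prefix {ι β : Type*} [Finite ι] [Finite β] {N : ℕ}
    (f : ι → (ℕ → β) → ℝ) (hf : ∀ i b, 0 < f i b)
    (hprefix : ∀ i a b, (∀ s < N, a s = b s) → f i a = f i b) :
    ∃ η, 0 < η ∧ ∀ i b, η ≤ f i b := by
  rcases isEmpty_or_nonempty (ℕ → β) with _ | ⟨⟨b₀⟩⟩
  · exact ⟨1, one_pos, fun _ => isEmptyElim⟩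
  let extend (t : Fin N → β) : ℕ → β := fun n => if hn : n < N then t ⟨n, hn⟩ else b₀ n
  obtain ⟨η, hη, hle⟩ := exists_pos_le_of_finite (fun it : ι × (Fin N → β) => f it.1 (extend it.2))
    fun it => hf _ _
  refine ⟨η, hη, fun i b => (hle (i, fun s => b s)).trans_eq (hprefix i _ b fun s hs => ?_)⟩
  simp [extend, hs]

theorem exists_pos_le_V_mul_Emat {l k : ℕ} {A : Fin k → Matrix (Fin l) (Fin l) ℝ}
    {ω : Fin k → ℝ} {V : Fin l → ℝ} (hV : ∀ p, 0 < V p) {N : ℕ}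
    (hpos : ∀ b p q, 0 < matSeq (fun i => (ω i)⁻¹ • A i) b N p q) :
    ∃ η, 0 < η ∧ 2 * η < 1 ∧ ∀ b p q, η ≤ V p * Emat A ω V b N p q := by
  obtain ⟨η, hη, hle⟩ := exists_pos_le_of_eqOn_prefix (N := N)
    (fun (pq : Fin l × Fin l) b => V pq.1 * Emat A ω V b N pq.1 pq.2)
    (fun pq b => by rw [Emat_eq_div]; exact mul_pos (hV _) (div_pos (hpos _ _ _) (hV _)))
    (fun pq a b hab => by rw [Emat_congr hab])
  refine ⟨min η (1 / 4), lt_min hη (by norm_num), by linarith [min_le_right η (1 / 4)],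
    fun b p q => (min_le_left _ _).trans (hle (p, q) b)⟩

theorem exists_eqOn_of_dSigma_lt {k : ℕ} {a b : ℕ → Fin k} {δ : ℝ} (hδ : 0 < δ)
    (h : dSigma a b < δ) : ∃ m : ℕ, 1 / δ < m + 1 ∧ ∀ s < m, a s = b s := by
  unfold dSigma at h
  split_ifs at h with hab
  · refine ⟨Nat.find hab, ?_, fun s hs => not_not.1 (Nat.find_min hab hs)⟩
    rwa [one_div_lt hδ (by positivity)]
  · simp only [not_exists, not_not] at hab
    exact ⟨⌈1 / δ⌉₊, (Nat.le_ceil _).trans_lt (lt_add_one _), fun s _ => hab s⟩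

theorem pow_div_lt_inv_mul_rpow {θ x : ℝ} (hθ₀ : 0 < θ) (hθ₁ : θ < 1) {m N : ℕ} (hN : 0 < N)
    (hx : x < m + 1) : θ ^ (m / N) < θ⁻¹ * (θ ^ (N : ℝ)⁻¹) ^ x := by
  have hN' : (0 : ℝ) < N := by exact_mod_cast hN
  have hm : (m : ℝ) + 1 ≤ N * ((m / N : ℕ) + 1 : ℝ) := by
    exact_mod_cast Nat.lt_mul_div_succ m hN
  have hexp : x / N - 1 < (m / N : ℕ) := by
    rw [sub_lt_iff_lt_add, div_lt_iff₀ hN']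
    nlinarith
  calc θ ^ (m / N) = θ ^ ((m / N : ℕ) : ℝ) := (Real.rpow_natCast _ _).symm
    _ < θ ^ (x / N - 1) := Real.rpow_lt_rpow_of_exponent_gt hθ₀ hθ₁ hexp
    _ = θ⁻¹ * (θ ^ (N : ℝ)⁻¹) ^ x := by
      rw [Real.rpow_sub hθ₀, Real.rpow_one, ← Real.rpow_mul hθ₀.le, inv_mul_eq_div (N : ℝ) x,
        div_eq_inv_mul]

theorem exists_abs_sub_lt_of_forall_abs_sub_lt_mul_rpow {α : Type*} (d : α → α → ℝ) (f : α → ℝ)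
    {C θ : ℝ} (hθ₀ : 0 < θ) (hθ₁ : θ < 1)
    (h : ∀ δ, 0 < δ → ∀ a b, d a b < δ → |f a - f b| < C * θ ^ (1 / δ)) (a : α) {ε : ℝ}
    (hε : 0 < ε) : ∃ δ, 0 < δ ∧ ∀ b, d a b < δ → |f a - f b| < ε := by
  have hlim : Tendsto (fun δ : ℝ => C * θ ^ (1 / δ)) (𝓝[>] 0) (𝓝 0) := by
    simpa only [one_div, mul_zero, Function.comp_def] using
      ((tendsto_rpow_atTop_of_base_lt_one θ (by linarith) hθ₁).comp
        tendsto_inv_nhdsGT_zero).const_mul C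
  obtain ⟨δ, hδε, hδ⟩ := ((hlim.eventually (gt_mem_nhds hε)).and self_mem_nhdsWithin).exists
  exact ⟨δ, hδ, fun b hb => (h δ hδ a b hb).trans hδε⟩

theorem freq_limit_continuous_general {l k : ℕ}
    (A : Fin k → Matrix (Fin l) (Fin l) ℝ) (ω : Fin k → ℝ) (V : Fin l → ℝ)
    (hA : ∀ i : Fin k, ∀ p q : Fin l, 0 ≤ A i p q)
    (hω : ∀ i, 0 < ω i) (hV : ∀ p, 0 < V p)
    (heig : ∀ i : Fin k, ∀ j : Fin l, ∑ p, V p * A i p j = ω i * V j)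
    (N : ℕ) (hN : 0 < N)
    (hpos : ∀ (b : ℕ → Fin k) (p q : Fin l),
      0 < matSeq (fun i => (ω i)⁻¹ • A i) b N p q)
    (c : (ℕ → Fin k) → Fin l → ℝ)
    (hc : ∀ (a : ℕ → Fin k) (i j : Fin l),
      Tendsto (fun n => Emat A ω V a n i j) atTop (nhds (c a i))) :
    (∃ C : ℝ, 0 < C ∧ ∃ θ : ℝ, 0 < θ ∧ θ < 1 ∧
      ∀ δ : ℝ, 0 < δ → ∀ a b : ℕ → Fin k, dSigma a b < δ →
        ∀ i : Fin l, |c a i - c b i| < C * θ ^ (1 / δ)) ∧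
    ∀ (i : Fin l) (a : ℕ → Fin k), ∀ ε : ℝ, 0 < ε →
      ∃ δ : ℝ, 0 < δ ∧ ∀ b : ℕ → Fin k, dSigma a b < δ → |c a i - c b i| < ε := by
  have hP : IsPerronTriple A ω V := ⟨hA, hω, hV, fun i => funext (heig i)⟩
  obtain ⟨η, hη, hη₁, hw⟩ := exists_pos_le_V_mul_Emat hV hpos
  obtain ⟨v, hv, hvV⟩ := exists_pos_le_of_finite V hV
  have hθ₀ : 0 < 1 - 2 * η := by linarith
  have hθ₁ : 1 - 2 * η < 1 := by linarith
  set θ := 1 - 2 * η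
  have holder : ∀ δ : ℝ, 0 < δ → ∀ a b : ℕ → Fin k, dSigma a b < δ →
      ∀ i : Fin l, |c a i - c b i| < (θ⁻¹ * v⁻¹) * (θ ^ (N : ℝ)⁻¹) ^ (1 / δ) := by
    intro δ hδ a b hab i
    obtain ⟨m, hm, hprefix⟩ := exists_eqOn_of_dSigma_lt hδ hab
    calc |c a i - c b i| ≤ θ ^ (m / N) * (V i)⁻¹ :=
          abs_sub_limit_le_of_eqOn hP hη.le hη₁.le hw hprefix (hc a i i) (hc b i i)
      _ ≤ θ ^ (m / N) * v⁻¹ := by gcongr; exact hvV i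
      _ < θ⁻¹ * (θ ^ (N : ℝ)⁻¹) ^ (1 / δ) * v⁻¹ := by
          gcongr; exact pow_div_lt_inv_mul_rpow hθ₀ hθ₁ hN hm
      _ = (θ⁻¹ * v⁻¹) * (θ ^ (N : ℝ)⁻¹) ^ (1 / δ) := by ring
  have hθN₀ : 0 < θ ^ (N : ℝ)⁻¹ := by positivity
  have hθN₁ : θ ^ (N : ℝ)⁻¹ < 1 := Real.rpow_lt_one hθ₀.le hθ₁ (by positivity)
  exact ⟨⟨_, by positivity, _, hθN₀, hθN₁, holder⟩, fun i a ε hε =>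
    exists_abs_sub_lt_of_forall_abs_sub_lt_mul_rpow dSigma (c · i) hθN₀ hθN₁
      (fun δ hδ a b hab => holder δ hδ a b hab i) a hε⟩

/-- Hölder-type continuity of `ā ↦ c_ā(i)`: if `d_Σ(ā,b̄) < δ` then
`|c_ā(i) - c_b̄(i)| < C θ^(1/δ)`; in particular each `ā ↦ c_ā(i)` is continuous
from `(Σ, d_Σ)` to `ℝ`. -/
theorem freq_limit_continuous {l k : ℕ} (hl : 0 < l) (hk : 0 < k)
    (A : Fin k → Matrix (Fin l) (Fin l) ℝ) (ω : Fin k → ℝ) (V : Fin l → ℝ)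
    (hA : ∀ i : Fin k, ∀ p q : Fin l, 0 ≤ A i p q)
    (hω : ∀ i, 0 < ω i) (hV : ∀ p, 0 < V p)
    (heig : ∀ i : Fin k, ∀ j : Fin l, ∑ p, V p * A i p j = ω i * V j)
    (N : ℕ) (hN : 0 < N)
    (hpos : ∀ (b : ℕ → Fin k) (p q : Fin l),
      0 < matSeq (fun i => (ω i)⁻¹ • A i) b N p q)
    (c : (ℕ → Fin k) → Fin l → ℝ)
    (hc : ∀ (a : ℕ → Fin k) (i j : Fin l),
      Tendsto (fun n => Emat A ω V a n i j) atTop (nhds (c a i))) :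
    (∃ C : ℝ, 0 < C ∧ ∃ θ : ℝ, 0 < θ ∧ θ < 1 ∧
      ∀ δ : ℝ, 0 < δ → ∀ a b : ℕ → Fin k, dSigma a b < δ →
        ∀ i : Fin l, |c a i - c b i| < C * θ ^ (1 / δ)) ∧
    ∀ (i : Fin l) (a : ℕ → Fin k), ∀ ε : ℝ, 0 < ε →
      ∃ δ : ℝ, 0 < δ ∧ ∀ b : ℕ → Fin k, dSigma a b < δ → |c a i - c b i| < ε :=
  freq_limit_continuous_general A ω V hA hω hV heig N hN hpos c hc

end
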